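/- Every OHC edge e satisfies f(e) ≥ i − 1: for each of the i−1 edges {u,v} of the OHC other than e, the Hamiltonian path obtained from the OHC by deleting {u,v} is the optimal path OP(u,v), and it contains e. -/

import Mathlib

open Finset

/-- The length of a path, given as a list of vertices, with respect to the
distance function `d`: the sum of `d` over consecutive entries. -/
def pathLen {V : Type*} (d : V → V → ℝ) (P : List V) : ℝ :=
  ((P.zip P.tail).map fun p => d p.1 p.2).sum

/-- A path (list of vertices) contains the edge `{x, y}` iff `x` and `y`
occur consecutively in it (in either order). -/
def ContainsEdge {V : Type*} (P : List V) (x y : V) : Prop :=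
  [x, y] <:+: P ∨ [y, x] <:+: P

/-- A Hamiltonian path of the whole (finite) vertex type `V` from `u` to `v`:
a duplicate-free list of all vertices starting at `u` and ending at `v`. -/
def IsHamPath {V : Type*} (P : List V) (u v : V) : Prop :=
  P.Nodup ∧ (∀ x : V, x ∈ P) ∧ P.head? = some u ∧ P.getLast? = some v

/-- The frequency of the (unordered) edge `e`: the number of unordered pairs
`{u, v}` of distinct vertices whose optimal path `OP u v` contains `e`. -/
noncomputable def freq {V : Type*} (OP : V → V → List V) (e : Sym2 V) : ℕ :=
  Nat.card {p : Sym2 V // ¬ p.IsDiag ∧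
    ∃ u v : V, p = s(u, v) ∧ ∃ x y : V, e = s(x, y) ∧ ContainsEdge (OP u v) x y}

/-- The length of the cycle obtained by closing up the list `C`. -/
def cycLen {V : Type*} (d : V → V → ℝ) (C : List V) : ℝ :=
  pathLen d (C ++ C.take 1)

/-- A Hamiltonian cycle of the finite vertex type `V`, represented as a
duplicate-free list of all vertices (closed up cyclically). -/
def IsHamCycle {V : Type*} (C : List V) : Prop :=
  C.Nodup ∧ ∀ x : V, x ∈ C

/-- `x` and `y` are cyclically consecutive on the cycle (list) `C`. -/
def CycAdj {V : Type*} (C : List V) (x y : V) : Prop :=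
  ContainsEdge (C ++ C.take 1) x y

/-!
Cutting the optimal cycle `H` at one of its edges `{u, v}` leaves a Hamiltonian path from `v`
to `u` of length `cycLen H - d u v`. Closing any Hamiltonian `v`–`u` path by `{u, v}` gives a
Hamiltonian cycle, so no such path is shorter, and by uniqueness the cut cycle is `OP u v`. It
keeps every other edge of `H`, in particular `e`; and since `H` has `i ≥ 3` vertices its `i`
edges are distinct, so `e` lies on the optimal paths of `i - 1` pairs.
-/

theorem Nat.add_one_mod_cases {j n : ℕ} (hj : j < n) :
    j + 1 < n ∧ (j + 1) % n = j + 1 ∨ j + 1 = n ∧ (j + 1) % n = 0 := by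
  rcases Nat.lt_or_ge (j + 1) n with h | h
  · exact .inl ⟨h, Nat.mod_eq_of_lt h⟩
  · exact .inr ⟨by omega, by rw [show j + 1 = n by omega, Nat.mod_self]⟩

namespace List

variable {α : Type*}

theorem pair_infix_iff_mem_consecutivePairs {l : List α} {a b : α} :
    [a, b] <:+: l ↔ (a, b) ∈ l.consecutivePairs := by
  induction l with
  | nil => simp
  | cons c l ih =>
    rw [infix_cons_iff, ih]
    cases l <;> simp [consecutivePairs]

def cyclicPairs (l : List α) : List (α × α) := l.zip (l.rotate 1)

theorem consecutivePairs_append_take_one (l : List α) :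
    (l ++ l.take 1).consecutivePairs = l.cyclicPairs := by
  cases l with
  | nil => rfl
  | cons a l =>
    have hlen : (a :: l).length = (l ++ [a]).length := by simp
    simpa [cyclicPairs, consecutivePairs] using zip_append (r₁ := [a]) (r₂ := []) hlen

theorem cyclicPairs_eq_consecutivePairs_append {l : List α} {u v : α}
    (hhead : l.head? = some v) (hlast : l.getLast? = some u) :
    l.cyclicPairs = l.consecutivePairs ++ [(u, v)] := by
  obtain ⟨w, rfl⟩ := getLast?_eq_some_iff.1 hlast
  cases w with
  | nil => simp_all [cyclicPairs]
  | cons a w =>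
    obtain rfl : a = v := by simpa using hhead
    have hlen : (a :: w).length = (w ++ [u]).length := by simp
    have h1 := zip_append (r₁ := [u]) (r₂ := [a]) hlen
    have h2 := zip_append (r₁ := [u]) (r₂ := []) hlen
    simp_all [cyclicPairs, consecutivePairs]

theorem cyclicPairs_rotate (l : List α) (n : ℕ) :
    (l.rotate n).cyclicPairs = l.cyclicPairs.rotate n := by
  rw [cyclicPairs, cyclicPairs, rotate_rotate, add_comm, ← rotate_rotate, zip_eq_zipWith,
    zip_eq_zipWith, zipWith_rotate_distrib _ _ _ _ (by simp)]

theorem length_cyclicPairs (l : List α) : l.cyclicPairs.length = l.length := by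
  simp [cyclicPairs]

theorem mem_cyclicPairs_iff {l : List α} {a b : α} :
    (a, b) ∈ l.cyclicPairs ↔
      ∃ (j : ℕ) (hj : j < l.length),
        l[j] = a ∧ l[(j + 1) % l.length]'(Nat.mod_lt _ (by omega)) = b := by
  simp [cyclicPairs, mem_iff_getElem, getElem_rotate]

theorem ne_of_mem_cyclicPairs {l : List α} (hl : l.Nodup) (hlen : 2 ≤ l.length) {a b : α}
    (h : (a, b) ∈ l.cyclicPairs) : a ≠ b := by
  obtain ⟨j, hj, rfl, rfl⟩ := mem_cyclicPairs_iff.1 h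
  rw [Ne, hl.getElem_inj_iff]
  rcases Nat.add_one_mod_cases hj with h | h <;> omega

theorem swap_notMem_cyclicPairs {l : List α} (hl : l.Nodup) (hlen : 3 ≤ l.length) {a b : α}
    (h : (a, b) ∈ l.cyclicPairs) : (b, a) ∉ l.cyclicPairs := by
  intro h'
  obtain ⟨j, hj, rfl, rfl⟩ := mem_cyclicPairs_iff.1 h
  obtain ⟨k, hk, hkj, hjk⟩ := mem_cyclicPairs_iff.1 h'
  rw [hl.getElem_inj_iff] at hkj hjk
  rcases Nat.add_one_mod_cases hj with h | h <;> rcases Nat.add_one_mod_cases hk with h' | h' <;>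
    omega

theorem nodup_cyclicPairs_map_sym2 {l : List α} (hl : l.Nodup) (hlen : 3 ≤ l.length) :
    (l.cyclicPairs.map fun p => s(p.1, p.2)).Nodup := by
  have hpairs : l.cyclicPairs.Nodup :=
    Nodup.of_map Prod.fst (by rwa [cyclicPairs, map_fst_zip (by simp)])
  refine hpairs.map_on fun p hp q hq hpq => ?_
  rcases Sym2.mk_eq_mk_iff.1 hpq with h | rfl
  · exact h
  · exact absurd hp (swap_notMem_cyclicPairs hl hlen hq)

theorem exists_rotate_head?_getLast? {l : List α} {u v : α} (h : (u, v) ∈ l.cyclicPairs) :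
    ∃ m, (l.rotate m).head? = some v ∧ (l.rotate m).getLast? = some u := by
  obtain ⟨j, hj, rfl, rfl⟩ := mem_cyclicPairs_iff.1 h
  refine ⟨j + 1, ?_, ?_⟩
  · rw [head?_eq_getElem?, getElem?_rotate (by omega), zero_add, getElem?_eq_getElem]
  · rw [getLast?_eq_getElem?, length_rotate, getElem?_rotate (by omega),
      show l.length - 1 + (j + 1) = j + l.length by omega, Nat.add_mod_right,
      Nat.mod_eq_of_lt hj, getElem?_eq_getElem]

end List

section HamiltonianCycles

variable {V : Type*}

theorem cycAdj_iff {H : List V} {a b : V} :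
    CycAdj H a b ↔ (a, b) ∈ H.cyclicPairs ∨ (b, a) ∈ H.cyclicPairs := by
  simp only [CycAdj, ContainsEdge, List.pair_infix_iff_mem_consecutivePairs,
    List.consecutivePairs_append_take_one]

theorem cycAdj_rotate {H : List V} {a b : V} (n : ℕ) :
    CycAdj (H.rotate n) a b ↔ CycAdj H a b := by
  simp only [cycAdj_iff, List.cyclicPairs_rotate, List.mem_rotate]

theorem containsEdge_reverse {P : List V} {x y : V} :
    ContainsEdge P.reverse x y ↔ ContainsEdge P x y := by
  have hrev : ∀ a b : V, [a, b] <:+: P.reverse ↔ [b, a] <:+: P := fun a b => by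
    rw [← List.reverse_infix, List.reverse_reverse]
    rfl
  rw [ContainsEdge, ContainsEdge, hrev, hrev, or_comm]

theorem containsEdge_of_cycAdj {P : List V} {u v x y : V} (hhead : P.head? = some v)
    (hlast : P.getLast? = some u) (h : CycAdj P x y) (hne : s(u, v) ≠ s(x, y)) :
    ContainsEdge P x y := by
  rw [cycAdj_iff, List.cyclicPairs_eq_consecutivePairs_append hhead hlast] at h
  simp only [List.mem_append, List.mem_singleton] at h
  simp only [ContainsEdge, List.pair_infix_iff_mem_consecutivePairs]
  rcases h with (h | h) | (h | h)
  · exact .inl h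
  · obtain ⟨rfl, rfl⟩ := Prod.mk.inj h
    exact absurd rfl hne
  · exact .inr h
  · obtain ⟨rfl, rfl⟩ := Prod.mk.inj h
    exact absurd Sym2.eq_swap hne

theorem IsHamCycle.length_eq_card [Fintype V] {H : List V} (hH : IsHamCycle H) :
    H.length = Fintype.card V :=
  le_antisymm hH.1.length_le_card <| by
    simpa using Fintype.card_le_of_surjective H.get fun x => List.mem_iff_get.1 (hH.2 x)

variable (d : V → V → ℝ)

theorem cycLen_eq_sum_cyclicPairs (l : List V) :
    cycLen d l = (l.cyclicPairs.map fun p => d p.1 p.2).sum := by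
  rw [cycLen, pathLen, ← List.consecutivePairs_append_take_one]

theorem cycLen_rotate (l : List V) (n : ℕ) : cycLen d (l.rotate n) = cycLen d l := by
  rw [cycLen_eq_sum_cyclicPairs, cycLen_eq_sum_cyclicPairs, List.cyclicPairs_rotate,
    List.map_rotate, (List.rotate_perm _ _).sum_eq]

theorem cycLen_eq_pathLen_add {l : List V} {u v : V} (hhead : l.head? = some v)
    (hlast : l.getLast? = some u) : cycLen d l = pathLen d l + d u v := by
  rw [cycLen_eq_sum_cyclicPairs, List.cyclicPairs_eq_consecutivePairs_append hhead hlast,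
    List.map_append, List.sum_append, pathLen]
  simp

theorem exists_rotate_eq_of_mem_cyclicPairs {H O : List V} {u v : V} (hH : IsHamCycle H)
    (hHmin : ∀ C : List V, IsHamCycle C → cycLen d H ≤ cycLen d C)
    (hO : IsHamPath O v u) (hOmin : ∀ Q : List V, IsHamPath Q v u → pathLen d O ≤ pathLen d Q)
    (hOuniq : ∀ Q : List V, IsHamPath Q v u → pathLen d Q = pathLen d O → Q = O)
    (huv : (u, v) ∈ H.cyclicPairs) :
    ∃ m, O = H.rotate m := by
  obtain ⟨m, hhead, hlast⟩ := List.exists_rotate_head?_getLast? huv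
  have hP : IsHamPath (H.rotate m) v u :=
    ⟨List.nodup_rotate.2 hH.1, fun x => List.mem_rotate.2 (hH.2 x), hhead, hlast⟩
  have hcyc : cycLen d (H.rotate m) ≤ cycLen d O := by
    rw [cycLen_rotate]
    exact hHmin O ⟨hO.1, hO.2.1⟩
  have hle : pathLen d (H.rotate m) ≤ pathLen d O := by
    rw [cycLen_eq_pathLen_add d hhead hlast, cycLen_eq_pathLen_add d hO.2.2.1 hO.2.2.2] at hcyc
    linarith
  exact ⟨m, (hOuniq _ hP (le_antisymm hle (hOmin _ hP))).symm⟩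

end HamiltonianCycles

theorem length_sub_one_le_freq {V : Type*} [Finite V] {OP : V → V → List V} {x y : V}
    {L : List (Sym2 V)} (hL : L.Nodup) (hxy : s(x, y) ∈ L)
    (hfreq : ∀ e ∈ L, e ≠ s(x, y) →
      ∃ u v, e = s(u, v) ∧ u ≠ v ∧ ContainsEdge (OP u v) x y) :
    L.length - 1 ≤ freq OP s(x, y) := by
  classical
  rw [freq, ← Set.coe_ofPred, Nat.card_coe_set_eq, ← List.toFinset_card_of_nodup hL,
    ← Finset.card_erase_of_mem (List.mem_toFinset.2 hxy), ← Set.ncard_coe_finset]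
  refine Set.ncard_le_ncard (fun e he => ?_) (Set.toFinite _)
  obtain ⟨hne, he⟩ := Finset.mem_erase.1 he
  obtain ⟨u, v, rfl, huv, hc⟩ := hfreq e (List.mem_toFinset.1 he) hne
  exact ⟨Sym2.mk_isDiag_iff.not.2 huv, u, v, rfl, x, y, rfl, hc⟩

theorem length_sub_one_le_freq_of_cycAdj {V : Type*} [Finite V] {OP : V → V → List V}
    {H : List V} (hH : H.Nodup) (hlen : 3 ≤ H.length) {x y : V} (hxy : CycAdj H x y)
    (hpaths : ∀ u v, u ≠ v → CycAdj H u v → s(u, v) ≠ s(x, y) →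
      ContainsEdge (OP u v) x y) :
    H.length - 1 ≤ freq OP s(x, y) := by
  have hmem : s(x, y) ∈ H.cyclicPairs.map fun p => s(p.1, p.2) := by
    rcases cycAdj_iff.1 hxy with h | h
    · exact List.mem_map_of_mem h
    · exact Sym2.eq_swap ▸ List.mem_map_of_mem h
  have := length_sub_one_le_freq (List.nodup_cyclicPairs_map_sym2 hH hlen) hmem fun e he hne => by
    obtain ⟨⟨a, b⟩, hab, rfl⟩ := List.mem_map.1 he
    have hab' := List.ne_of_mem_cyclicPairs hH (by omega) hab
    exact ⟨a, b, rfl, hab', hpaths a b hab' (cycAdj_iff.2 (.inl hab)) hne⟩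
  rwa [List.length_map, List.length_cyclicPairs] at this

theorem stmt7_general {V : Type*} [Fintype V] (i : ℕ) (hi : 4 ≤ i)
    (hcard : Fintype.card V = i)
    (d : V → V → ℝ)
    (OP : V → V → List V)
    (hOP : ∀ u v : V, u ≠ v → IsHamPath (OP u v) u v)
    (hOPmin : ∀ u v : V, u ≠ v → ∀ Q : List V, IsHamPath Q u v →
      pathLen d (OP u v) ≤ pathLen d Q)
    (hOPuniq : ∀ u v : V, u ≠ v → ∀ Q : List V, IsHamPath Q u v →
      pathLen d Q = pathLen d (OP u v) → Q = OP u v)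
    (hOPsymm : ∀ u v : V, OP v u = (OP u v).reverse)
    (H : List V) (hH : IsHamCycle H)
    (hHmin : ∀ C : List V, IsHamCycle C → cycLen d H ≤ cycLen d C) :
    ∀ x y : V, x ≠ y → CycAdj H x y →
      (∀ u v : V, u ≠ v → CycAdj H u v → s(u, v) ≠ s(x, y) →
        (∃ k : ℕ, OP u v = H.rotate k ∨ OP u v = H.reverse.rotate k) ∧
        ContainsEdge (OP u v) x y) ∧
      i - 1 ≤ freq OP s(x, y) := by
  intro x y _ hxyH
  have hlen : H.length = i := hH.length_eq_card.trans hcard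
  have hrot : ∀ u v, u ≠ v → (u, v) ∈ H.cyclicPairs → s(u, v) ≠ s(x, y) →
      (∃ m, OP v u = H.rotate m) ∧ ContainsEdge (OP v u) x y := by
    intro u v huv hmem hne
    have hO := hOP v u huv.symm
    obtain ⟨m, hm⟩ := exists_rotate_eq_of_mem_cyclicPairs d hH hHmin hO (hOPmin v u huv.symm)
      (hOPuniq v u huv.symm) hmem
    refine ⟨⟨m, hm⟩, containsEdge_of_cycAdj hO.2.2.1 hO.2.2.2 ?_ hne⟩
    rwa [hm, cycAdj_rotate]
  have hpaths : ∀ u v, u ≠ v → CycAdj H u v → s(u, v) ≠ s(x, y) →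
      (∃ k, OP u v = H.rotate k ∨ OP u v = H.reverse.rotate k) ∧
        ContainsEdge (OP u v) x y := by
    intro u v huv hadj hne
    rcases cycAdj_iff.1 hadj with h | h
    · obtain ⟨⟨m, hm⟩, hc⟩ := hrot u v huv h hne
      rw [hOPsymm v u, containsEdge_reverse, hm, List.reverse_rotate]
      exact ⟨⟨_, .inr rfl⟩, hm ▸ hc⟩
    · obtain ⟨⟨m, hm⟩, hc⟩ := hrot v u huv.symm h (Sym2.eq_swap ▸ hne)
      exact ⟨⟨m, .inl hm⟩, hc⟩
  refine ⟨hpaths, hlen ▸ length_sub_one_le_freq_of_cycAdj hH.1 (by omega) hxyH ?_⟩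
  exact fun u v huv hadj hne => (hpaths u v huv hadj hne).2

/-- Every OHC edge `e = {x, y}` has frequency at least `i - 1`:
for each OHC edge `{u, v}` other than `e`, the Hamiltonian path obtained from
the OHC by deleting `{u, v}` is the optimal path `OP u v`, and it contains `e`. -/
theorem stmt7 {V : Type*} [Fintype V] [DecidableEq V] (i : ℕ) (hi : 4 ≤ i)
    (hcard : Fintype.card V = i)
    (d : V → V → ℝ) (hdsymm : ∀ u v : V, d u v = d v u)
    (hdpos : ∀ u v : V, u ≠ v → 0 < d u v)
    (OP : V → V → List V)
    (hOP : ∀ u v : V, u ≠ v → IsHamPath (OP u v) u v)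
    (hOPmin : ∀ u v : V, u ≠ v → ∀ Q : List V, IsHamPath Q u v →
      pathLen d (OP u v) ≤ pathLen d Q)
    (hOPuniq : ∀ u v : V, u ≠ v → ∀ Q : List V, IsHamPath Q u v →
      pathLen d Q = pathLen d (OP u v) → Q = OP u v)
    (hOPsymm : ∀ u v : V, OP v u = (OP u v).reverse)
    (H : List V) (hH : IsHamCycle H)
    (hHmin : ∀ C : List V, IsHamCycle C → cycLen d H ≤ cycLen d C)
    (hHuniq : ∀ C : List V, IsHamCycle C → cycLen d C = cycLen d H →
      ∃ k : ℕ, C = H.rotate k ∨ C = H.reverse.rotate k) :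
    ∀ x y : V, x ≠ y → CycAdj H x y →
      (∀ u v : V, u ≠ v → CycAdj H u v → s(u, v) ≠ s(x, y) →
        (∃ k : ℕ, OP u v = H.rotate k ∨ OP u v = H.reverse.rotate k) ∧
        ContainsEdge (OP u v) x y) ∧
      i - 1 ≤ freq OP s(x, y) :=
  stmt7_general i hi hcard d OP hOP hOPmin hOPuniq hOPsymm H hH hHmin
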